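/- Under the DSEE policy with exploration sequence defined by including time $t$ whenever $|\mathcal{A}(t-1)| < N\lceil w \log t \rceil$, where $w > \frac{1}{a\delta^2}$, $\delta = \min\{c/2, \zeta u_0\}$ for a constant $c \in (0, \Delta_2)$, the regret satisfies for all $T$: $R_T^{\pi^*}(\mathcal{F}) \le \sum_{n=2}^{N} \lceil w \log T \rceil \Delta_n + 2N\Delta_N\left(1 + \frac{1}{a\delta^2 w - 1}\right)$. -/

import Mathlib

/-
Split the regret into exploration and exploitation rounds. Exploration is round-robin and by
time `T` there have been at most `N⌈w log T⌉` exploration rounds, so each suboptimal arm is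
played at most `⌈w log T⌉` times there. At an exploitation round `t` every arm has already been
explored at least `⌈w log t⌉` times, so by the Chernoff–Hoeffding bound and a union bound all
sample means are `δ`-accurate except with probability `2N t^(-aδ²w)`; since `2δ ≤ c < Δ₂`,
accurate means make the greedy choice the best arm. Each exploitation round thus costs at most
`2NΔ_N t^(-aδ²w)`, and `∑ t^(-p) ≤ 1 + 1/(p-1)` for `p = aδ²w > 1`.
-/

open MeasureTheory Real Finset

lemma sum_range_mul_mod {M : Type*} [AddCommMonoid M] {N : ℕ} (hN : 0 < N) (g : Fin N → M)
    (L : ℕ) : ∑ j ∈ range (L * N), g ⟨j % N, Nat.mod_lt _ hN⟩ = L • ∑ i, g i := by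
  rw [← Fin.sum_univ_eq_sum_range (fun j => g ⟨j % N, Nat.mod_lt _ hN⟩), ← finProdFinEquiv.sum_comp,
    Fintype.sum_prod_type]
  simp [Nat.mod_eq_of_lt]

lemma le_card_filter_range_mod {N L m n : ℕ} (hn : n < N) (hm : N * L ≤ m) :
    L ≤ #{j ∈ range m | j % N = n} := by
  have hcount : #{j ∈ range (L * N) | j % N = n} = L := by
    rw [card_filter]
    convert sum_range_mul_mod (by omega) (fun i : Fin N => if i = ⟨n, hn⟩ then 1 else 0) L using 2
    · simp [Fin.ext_iff]
    · simp
  rw [← hcount]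
  exact card_le_card (filter_subset_filter _ (range_subset_range.2 (by linarith)))

lemma monotone_log_natCast : Monotone fun n : ℕ => log n := by
  intro s t hst
  rcases s.eq_zero_or_pos with rfl | hs
  · simpa using log_natCast_nonneg t
  · exact log_le_log (by exact_mod_cast hs) (by exact_mod_cast hst)

def countIcc (A : Set ℕ) [DecidablePred (· ∈ A)] (t : ℕ) : ℕ := #{s ∈ Icc 1 t | s ∈ A}

section countIcc

variable (A : Set ℕ) [DecidablePred (· ∈ A)]

lemma countIcc_succ (t : ℕ) :
    countIcc A (t + 1) = countIcc A t + if t + 1 ∈ A then 1 else 0 := by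
  rw [countIcc, countIcc, ← insert_Icc_right_eq_Icc_add_one (by omega), filter_insert]
  split_ifs <;> simp

lemma countIcc_le {g : ℕ → ℕ} (hg : Monotone g)
    (hA : ∀ t, t + 1 ∈ A → countIcc A t < g (t + 1)) (T : ℕ) : countIcc A T ≤ g T := by
  induction T with
  | zero => simp [countIcc]
  | succ T ih =>
    rw [countIcc_succ]
    split_ifs with hT
    · exact hA T hT
    · simpa using ih.trans (hg T.le_succ)

-- The `k`-th element of `A` is the `t ∈ A` with `countIcc A t = k`.
lemma sum_filter_mem_countIcc {M : Type*} [AddCommMonoid M] (f : ℕ → M) (T : ℕ) :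
    ∑ t ∈ Icc 1 T with t ∈ A, f (countIcc A t - 1) = ∑ j ∈ range (countIcc A T), f j := by
  induction T with
  | zero => simp [countIcc]
  | succ T ih =>
    rw [← insert_Icc_right_eq_Icc_add_one (by omega), filter_insert, countIcc_succ]
    split_ifs with hT
    · rw [sum_insert (by simp), sum_range_succ, ih, add_comm, countIcc_succ, if_pos hT]
      rfl
    · simpa

lemma card_filter_mem_countIcc (P : ℕ → Prop) [DecidablePred P] (T : ℕ) :
    #{t ∈ Icc 1 T | t ∈ A ∧ P (countIcc A t - 1)} = #{j ∈ range (countIcc A T) | P j} := by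
  rw [← filter_filter, card_filter, sum_filter_mem_countIcc A (fun j => if P j then 1 else 0),
    card_filter]

lemma le_card_filter_mem_countIcc_mod {N L T : ℕ} (n : Fin N) (hT : N * L ≤ countIcc A T) :
    L ≤ #{s ∈ Icc 1 T | s ∈ A ∧ (countIcc A s - 1) % N = n} := by
  rw [card_filter_mem_countIcc A (· % N = n)]
  exact le_card_filter_range_mod n.isLt hT

lemma sum_filter_mem_countIcc_mod_le {M : Type*} [AddCommMonoid M] [PartialOrder M]
    [IsOrderedAddMonoid M] {N : ℕ} (hN : 0 < N) {g : Fin N → M} (hg : ∀ i, 0 ≤ g i) {T L : ℕ}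
    (hT : countIcc A T ≤ N * L) :
    ∑ t ∈ Icc 1 T with t ∈ A, g ⟨(countIcc A t - 1) % N, Nat.mod_lt _ hN⟩ ≤ L • ∑ i, g i := by
  rw [sum_filter_mem_countIcc A (fun j => g ⟨j % N, Nat.mod_lt _ hN⟩), ← sum_range_mul_mod hN g L,
    mul_comm]
  exact sum_le_sum_of_subset_of_nonneg (range_subset_range.2 hT) fun _ _ _ => hg _

lemma countIcc_le_mul_ceil_log {N : ℕ} {w : ℝ} (hw : 0 ≤ w)
    (hA : ∀ t, 1 ≤ t → t ∈ A → countIcc A (t - 1) < N * ⌈w * log t⌉₊) (T : ℕ) :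
    countIcc A T ≤ N * ⌈w * log T⌉₊ :=
  countIcc_le A (fun _ _ hst => Nat.mul_le_mul_left _
      (Nat.ceil_mono (mul_le_mul_of_nonneg_left (monotone_log_natCast hst) hw)))
    (fun t ht => by simpa using hA (t + 1) (by omega) ht) T

end countIcc

lemma exp_neg_mul_le_rpow_neg {t k w τ : ℝ} (ht : 0 < t) (hk : 0 ≤ k) (hτ : w * log t ≤ τ) :
    exp (-(k * τ)) ≤ t ^ (-(k * w)) := by
  rw [rpow_def_of_pos ht, exp_le_exp]
  nlinarith

lemma sum_Icc_rpow_neg_le {p : ℝ} (hp : 1 < p) (T : ℕ) :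
    ∑ t ∈ Icc 1 T, (t : ℝ) ^ (-p) ≤ 1 + 1 / (p - 1) := by
  rcases T with _ | m
  · simp only [Nat.lt_one_iff, Icc_eq_empty_of_lt, sum_empty]
    positivity
  have htail : ∑ t ∈ Ico 1 (m + 1), ((t + 1 : ℕ) : ℝ) ^ (-p) ≤ 1 / (p - 1) := by
    have hint := integral_Ioi_rpow_of_lt (neg_lt_neg hp) zero_lt_one
    rw [one_rpow, show -p + 1 = -(p - 1) by ring, neg_div_neg_eq] at hint
    refine (AntitoneOn.sum_Ico_le_integral (f := fun x : ℝ => x ^ (-p)) (a := 1) ?_ ?_ ?_).trans_eq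
      (by exact_mod_cast hint)
    · exact (antitoneOn_rpow_Ioi_of_exponent_nonpos (by linarith)).mono
        fun x hx => lt_of_lt_of_le zero_lt_one (by exact_mod_cast hx.1)
    · exact_mod_cast integrableOn_Ioi_rpow_of_lt (neg_lt_neg hp) zero_lt_one
    · exact fun x hx => rpow_nonneg (le_trans (by positivity) (le_of_lt hx)) _
  rw [← insert_Icc_add_one_left_eq_Icc (by omega), sum_insert (by simp)]
  rw [sum_Ico_add' (fun t : ℕ => (t : ℝ) ^ (-p)), Ico_add_one_right_eq_Icc] at htail
  simpa using htail

lemma sum_rpow_neg_le {p : ℝ} (hp : 1 < p) {s : Finset ℕ} (hs : 0 ∉ s) :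
    ∑ t ∈ s, (t : ℝ) ^ (-p) ≤ 1 + 1 / (p - 1) := by
  refine le_trans ?_ (sum_Icc_rpow_neg_le hp (s.sup id))
  refine sum_le_sum_of_subset_of_nonneg (fun t ht => ?_) fun _ _ _ => by positivity
  exact mem_Icc.2 ⟨Nat.one_le_iff_ne_zero.2 (ne_of_mem_of_not_mem ht hs), le_sup (f := id) ht⟩

lemma sum_le_mul_of_le_mul_rpow_neg {f : ℕ → ℝ} {s : Finset ℕ} (hs : 0 ∉ s) {C p : ℝ}
    (hC : 0 ≤ C) (hp : 1 < p) (hf : ∀ t ∈ s, f t ≤ C * (t : ℝ) ^ (-p)) :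
    ∑ t ∈ s, f t ≤ C * (1 + 1 / (p - 1)) := by
  refine (sum_le_sum hf).trans ?_
  rw [← mul_sum]
  exact mul_le_mul_of_nonneg_left (sum_rpow_neg_le hp hs) hC

section Greedy

variable {Ω ι : Type*} {θ : ι → ℝ} {i₀ : ι} {X : Ω → ι}

lemma setOf_ne_subset_iUnion_abs_sub {θhat : ι → Ω → ℝ} {δ : ℝ}
    (hsep : ∀ i ≠ i₀, 2 * δ < θ i₀ - θ i) (hX : ∀ ω i, θhat i ω ≤ θhat (X ω) ω) :
    {ω | X ω ≠ i₀} ⊆ ⋃ i, {ω | δ ≤ |θhat i ω - θ i|} := by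
  intro ω hω
  by_contra! h
  simp only [Set.mem_iUnion, Set.mem_ofPred_eq, not_exists, not_le, abs_lt] at h
  have := hsep _ hω
  linarith [hX ω i₀, h i₀, h (X ω)]

variable [MeasurableSpace Ω] {ℙ : Measure Ω} [IsProbabilityMeasure ℙ]
  [MeasurableSpace ι] [MeasurableSingletonClass ι]

lemma sub_integral_comp_le_mul_measureReal_ne [Finite ι] (hX : Measurable X) {D : ℝ}
    (hD : ∀ i, θ i₀ - θ i ≤ D) :
    θ i₀ - ∫ ω, θ (X ω) ∂ℙ ≤ D * ℙ.real {ω | X ω ≠ i₀} := by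
  have hint : Integrable (fun ω => θ (X ω)) ℙ := Integrable.of_finite.comp_measurable hX
  have hmeas : MeasurableSet {ω | X ω ≠ i₀} := (hX (measurableSet_singleton i₀)).compl
  have hpt : ∀ ω, θ i₀ - θ (X ω) ≤ {ω | X ω ≠ i₀}.indicator (fun _ => D) ω := by
    intro ω
    by_cases hω : X ω = i₀
    · simp [hω]
    · simpa [hω] using hD (X ω)
  calc θ i₀ - ∫ ω, θ (X ω) ∂ℙ = ∫ ω, (θ i₀ - θ (X ω)) ∂ℙ := by
        rw [integral_sub (integrable_const _) hint, integral_const, probReal_univ, one_smul]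
    _ ≤ ∫ ω, {ω | X ω ≠ i₀}.indicator (fun _ => D) ω ∂ℙ :=
        integral_mono ((integrable_const _).sub hint) ((integrable_const _).indicator hmeas) hpt
    _ = D * ℙ.real {ω | X ω ≠ i₀} := by
        rw [integral_indicator_const _ hmeas, smul_eq_mul, mul_comm]

lemma sub_integral_comp_le_of_argmax [Fintype ι] (hX : Measurable X) {D : ℝ}
    (hD : ∀ i, θ i₀ - θ i ≤ D) {θhat : ι → Ω → ℝ} {δ ε : ℝ}
    (hsep : ∀ i ≠ i₀, 2 * δ < θ i₀ - θ i) (hXmax : ∀ ω i, θhat i ω ≤ θhat (X ω) ω)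
    (hε : 0 ≤ ε) (hdev : ∀ i, ℙ {ω | δ ≤ |θhat i ω - θ i|} ≤ ENNReal.ofReal ε) :
    θ i₀ - ∫ ω, θ (X ω) ∂ℙ ≤ D * (Fintype.card ι * ε) := by
  have hD0 : 0 ≤ D := by simpa using hD i₀
  have hμ : ℙ {ω | X ω ≠ i₀} ≤ ENNReal.ofReal (Fintype.card ι * ε) :=
    calc ℙ {ω | X ω ≠ i₀} ≤ ℙ (⋃ i, {ω | δ ≤ |θhat i ω - θ i|}) :=
          measure_mono (setOf_ne_subset_iUnion_abs_sub hsep hXmax)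
      _ ≤ ∑ i, ℙ {ω | δ ≤ |θhat i ω - θ i|} := measure_iUnion_fintype_le _ _
      _ ≤ ∑ _i : ι, ENNReal.ofReal ε := sum_le_sum fun i _ => hdev i
      _ = ENNReal.ofReal (Fintype.card ι * ε) := by
        rw [sum_const, card_univ, nsmul_eq_mul, ENNReal.ofReal_mul (by positivity),
          ENNReal.ofReal_natCast]
  calc θ i₀ - ∫ ω, θ (X ω) ∂ℙ ≤ D * ℙ.real {ω | X ω ≠ i₀} :=
        sub_integral_comp_le_mul_measureReal_ne hX hD
    _ ≤ D * (Fintype.card ι * ε) :=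
        mul_le_mul_of_nonneg_left (ENNReal.toReal_le_of_le_ofReal (by positivity) hμ) hD0

lemma sub_integral_comp_le_of_argmax_of_exp [Fintype ι] (hX : Measurable X) {D : ℝ}
    (hD : ∀ i, θ i₀ - θ i ≤ D) {θhat : ι → Ω → ℝ} {δ k w t : ℝ} {n : ι → ℝ}
    (hsep : ∀ i ≠ i₀, 2 * δ < θ i₀ - θ i) (hXmax : ∀ ω i, θhat i ω ≤ θhat (X ω) ω)
    (hdev : ∀ i, ℙ {ω | δ ≤ |θhat i ω - θ i|} ≤ ENNReal.ofReal (2 * exp (-(k * n i))))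
    (ht : 0 < t) (hk : 0 ≤ k) (hn : ∀ i, w * log t ≤ n i) :
    θ i₀ - ∫ ω, θ (X ω) ∂ℙ ≤ D * (Fintype.card ι * (2 * t ^ (-(k * w)))) := by
  refine sub_integral_comp_le_of_argmax hX hD hsep hXmax (by positivity) fun i =>
    (hdev i).trans (ENNReal.ofReal_le_ofReal ?_)
  gcongr 2 * ?_
  exact exp_neg_mul_le_rpow_neg ht hk (hn i)

end Greedy

section SortedMeans

variable {N : ℕ} {θ Δ : Fin N → ℝ} {σ : Equiv.Perm (Fin N)}

lemma sub_apply_perm_zero_nonneg (hσ : Antitone (θ ∘ σ)) (hN : 0 < N) (i : Fin N) :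
    0 ≤ θ (σ ⟨0, hN⟩) - θ i :=
  sub_nonneg.2 (by simpa using hσ (show ⟨0, hN⟩ ≤ σ.symm i from Fin.le_def.2 (Nat.zero_le _)))

lemma sub_apply_perm_zero_le_gap_last (hσ : Antitone (θ ∘ σ)) {hN : 0 < N}
    (hΔ : ∀ n, Δ n = θ (σ ⟨0, hN⟩) - θ (σ n)) (i : Fin N) :
    θ (σ ⟨0, hN⟩) - θ i ≤ Δ ⟨N - 1, by omega⟩ := by
  have : θ (σ ⟨N - 1, by omega⟩) ≤ θ i := by
    simpa using hσ (show σ.symm i ≤ ⟨N - 1, by omega⟩ from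
      Fin.le_def.2 (Nat.le_sub_one_of_lt (σ.symm i).isLt))
  linarith [hΔ ⟨N - 1, by omega⟩]

lemma lt_sub_apply_perm_zero_of_ne (hσ : Antitone (θ ∘ σ)) {hN : 1 < N}
    (hΔ : ∀ n, Δ n = θ (σ ⟨0, by omega⟩) - θ (σ n)) {x : ℝ} (hx : x < Δ ⟨1, hN⟩) {i : Fin N}
    (hi : i ≠ σ ⟨0, by omega⟩) : x < θ (σ ⟨0, by omega⟩) - θ i := by
  have : θ i ≤ θ (σ ⟨1, hN⟩) := by
    simpa using hσ (Fin.le_def.2 (Nat.one_le_iff_ne_zero.2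
      fun h => hi (σ.symm_apply_eq.1 (Fin.ext h))) : (⟨1, hN⟩ : Fin N) ≤ σ.symm i)
  linarith [hΔ ⟨1, hN⟩]

lemma sum_sub_apply_perm_eq_sum_erase {k : Fin N} (hΔ : ∀ n, Δ n = θ (σ k) - θ (σ n)) :
    ∑ i, (θ (σ k) - θ i) = ∑ n ∈ univ.erase k, Δ n := by
  rw [← Equiv.sum_comp σ, ← sum_erase univ (f := fun i => θ (σ k) - θ (σ i)) (sub_self _)]
  exact sum_congr rfl fun n _ => (hΔ n).symm

end SortedMeans

/-- DSEE regret bound for light-tailed rewards (Theorem 1): with exploration sequence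
`t ∈ A ↔ |A(t-1)| < N⌈w log t⌉`, constants `a, ζ, u₀` from the Chernoff–Hoeffding bound,
`c ∈ (0, Δ₂)`, `δ = min{c/2, ζu₀}`, `w > 1/(aδ²)`, round-robin exploration and
largest-sample-mean exploitation, the regret satisfies
`R_T ≤ ∑_{n=2}^N ⌈w log T⌉ Δₙ + 2NΔ_N(1 + 1/(aδ²w - 1))` for all `T`. -/
theorem dsee_regret_light_tailed {Ω : Type*} [MeasurableSpace Ω]
    (ℙ : Measure Ω) [IsProbabilityMeasure ℙ]
    (N : ℕ) (hN : 2 ≤ N) (θ : Fin N → ℝ)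
    -- σ sorts the means in nonincreasing order; Δ n is the gap of the rank-n arm
    (σ : Equiv.Perm (Fin N)) (hσ : ∀ i j : Fin N, i ≤ j → θ (σ j) ≤ θ (σ i))
    (Δ : Fin N → ℝ) (hΔ : ∀ n, Δ n = θ (σ ⟨0, by omega⟩) - θ (σ n))
    -- constants for the Chernoff–Hoeffding bound and the exploration cardinality
    (a ζ u₀ c δ w : ℝ) (ha : 0 < a) (hζ : 0 < ζ) (hu₀ : 0 < u₀)
    (hc0 : 0 < c) (hc : c < Δ ⟨1, by omega⟩)
    (hδ : δ = min (c / 2) (ζ * u₀)) (hw : 1 / (a * δ ^ 2) < w)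
    -- the exploration sequence `A` and its counting function
    (A : Set ℕ) [DecidablePred (· ∈ A)]
    (cnt : ℕ → ℕ) (hcnt : ∀ t, cnt t = ((Finset.Icc 1 t).filter (· ∈ A)).card)
    (hA : ∀ t, 1 ≤ t → (t ∈ A ↔ cnt (t - 1) < N * ⌈w * Real.log t⌉₊))
    -- the arm selection policy: round-robin during exploration
    (pol : ℕ → Ω → Fin N) (hpolmeas : ∀ t, Measurable (pol t))
    (hround : ∀ t ∈ A, ∀ ω, pol t ω = ⟨(cnt t - 1) % N, Nat.mod_lt _ (by omega)⟩)
    -- sample means from exploration observations and their Chernoff deviation bound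
    (τ : Fin N → ℕ → ℕ)
    (hτ : ∀ n t, τ n t = ((Finset.Icc 1 (t - 1)).filter
      (fun s => s ∈ A ∧ (cnt s - 1) % N = (n : ℕ))).card)
    (θbar : Fin N → ℕ → Ω → ℝ)
    (hdev : ∀ n t, 1 ≤ t → t ∉ A →
      ℙ {ω | δ ≤ |θbar n t ω - θ n|} ≤ ENNReal.ofReal (2 * exp (-(a * δ ^ 2 * τ n t))))
    -- exploitation: play the arm with the largest sample mean
    (hexploit : ∀ t, 1 ≤ t → t ∉ A → ∀ ω, ∀ n, θbar n t ω ≤ θbar (pol t ω) t ω)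
    -- regret
    (R : ℕ → ℝ)
    (hR : ∀ T, R T = T * θ (σ ⟨0, by omega⟩) - ∑ t ∈ Finset.Icc 1 T, ∫ ω, θ (pol t ω) ∂ℙ) :
    ∀ T, R T ≤ (∑ n ∈ Finset.univ.erase (⟨0, by omega⟩ : Fin N), (⌈w * Real.log T⌉₊ : ℝ) * Δ n)
      + 2 * N * Δ ⟨N - 1, by omega⟩ * (1 + 1 / (a * δ ^ 2 * w - 1)) := by
  intro T
  obtain rfl : cnt = countIcc A := funext hcnt
  have hδ0 : 0 < δ := hδ ▸ lt_min (by linarith) (by positivity)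
  have h2δ : 2 * δ < Δ ⟨1, by omega⟩ := by linarith [hδ ▸ min_le_left (c / 2) (ζ * u₀)]
  have hp : 1 < a * δ ^ 2 * w := by rwa [div_lt_iff₀ (by positivity), mul_comm] at hw
  have hw0 : 0 ≤ w := ((by positivity : 0 < 1 / (a * δ ^ 2)).trans hw).le
  have hgap_le := sub_apply_perm_zero_le_gap_last hσ hΔ
  have hexploit_round : ∀ t ∈ (Icc 1 T).filter (· ∉ A), θ (σ ⟨0, by omega⟩) - ∫ ω, θ (pol t ω) ∂ℙ ≤
      2 * N * Δ ⟨N - 1, by omega⟩ * (t : ℝ) ^ (-(a * δ ^ 2 * w)) := fun t ht => by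
    obtain ⟨⟨ht1, -⟩, htA⟩ := mem_filter.1 ht |>.imp_left mem_Icc.1
    refine (sub_integral_comp_le_of_argmax_of_exp (t := t) (w := w) (hpolmeas t) hgap_le
      (fun i hi => lt_sub_apply_perm_zero_of_ne hσ hΔ h2δ hi) (hexploit t ht1 htA)
      (hdev · t ht1 htA) (by positivity) (by positivity) fun n => ?_).trans_eq
      (by simp only [Fintype.card_fin]; ring)
    rw [hτ]
    exact (Nat.le_ceil _).trans
      (mod_cast le_card_filter_mem_countIcc_mod A n (not_lt.1 ((hA t ht1).not.1 htA)))
  have hsplit : R T = ∑ t ∈ Icc 1 T with t ∈ A, (θ (σ ⟨0, by omega⟩) - ∫ ω, θ (pol t ω) ∂ℙ)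
      + ∑ t ∈ Icc 1 T with t ∉ A, (θ (σ ⟨0, by omega⟩) - ∫ ω, θ (pol t ω) ∂ℙ) := by
    rw [hR, sum_filter_add_sum_filter_not, sum_sub_distrib, sum_const, Nat.card_Icc, nsmul_eq_mul]
    simp
  rw [hsplit]
  refine add_le_add ?_ (sum_le_mul_of_le_mul_rpow_neg (by simp) ?_ hp hexploit_round)
  · calc _ = ∑ t ∈ Icc 1 T with t ∈ A,
          (θ (σ ⟨0, by omega⟩) - θ ⟨(countIcc A t - 1) % N, Nat.mod_lt _ (by omega)⟩) :=
          sum_congr rfl fun t ht => by simp [hround t (mem_filter.1 ht).2]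
      _ ≤ ⌈w * log T⌉₊ • ∑ i, (θ (σ ⟨0, by omega⟩) - θ i) :=
          sum_filter_mem_countIcc_mod_le A (by omega) (sub_apply_perm_zero_nonneg hσ (by omega))
            (countIcc_le_mul_ceil_log A hw0 (fun t ht => (hA t ht).1) T)
      _ = _ := by rw [nsmul_eq_mul, sum_sub_apply_perm_eq_sum_erase hΔ, mul_sum]
  · exact mul_nonneg (by positivity) (by simpa using hgap_le (σ ⟨0, by omega⟩))
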